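/- Golub–Kahan biorthogonality: the tensors U₁,...,U_{ℓ+1} generated by global Golub–Kahan bidiagonalization are orthonormal, and the tensors V₁,...,V_ℓ are orthonormal, with respect to the Frobenius inner product, assuming no breakdown. -/
import Mathlib


open Matrix BigOperators

/-- Frobenius inner product of tensors `ℝ^{I×J}` (multi-indices flattened). -/
def tinner {I J : Type*} [Fintype I] [Fintype J] (X Y : Matrix I J ℝ) : ℝ :=
  ∑ i, ∑ j, X i j * Y i j

/-- Frobenius norm of a tensor. -/
noncomputable def tnorm {I J : Type*} [Fintype I] [Fintype J] (X : Matrix I J ℝ) : ℝ :=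
  Real.sqrt (tinner X X)

section Helpers

variable {I J : Type*} [Fintype I] [Fintype J]

lemma tinner_comm (X Y : Matrix I J ℝ) : tinner X Y = tinner Y X := by
  simp [tinner, mul_comm]

lemma tinner_smul_left (c : ℝ) (X Y : Matrix I J ℝ) : tinner (c • X) Y = c * tinner X Y := by
  simp [tinner, Finset.mul_sum, Matrix.smul_apply, mul_assoc]

lemma tinner_smul_right (c : ℝ) (X Y : Matrix I J ℝ) : tinner X (c • Y) = c * tinner X Y := by
  rw [tinner_comm, tinner_smul_left, tinner_comm]

lemma tinner_sub_left (X Y Z : Matrix I J ℝ) : tinner (X - Y) Z = tinner X Z - tinner Y Z := by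
  simp [tinner, Matrix.sub_apply, sub_mul, Finset.sum_sub_distrib]

lemma tinner_add_right (X Y Z : Matrix I J ℝ) : tinner X (Y + Z) = tinner X Y + tinner X Z := by
  simp [tinner, Matrix.add_apply, mul_add, Finset.sum_add_distrib]

lemma tinner_zero_right (X : Matrix I J ℝ) : tinner X (0 : Matrix I J ℝ) = 0 := by
  simp [tinner]

lemma tinner_self_nonneg (X : Matrix I J ℝ) : 0 ≤ tinner X X := by
  apply Finset.sum_nonneg; intro i _; apply Finset.sum_nonneg; intro j _; exact mul_self_nonneg _

lemma tinner_self_eq (X : Matrix I J ℝ) : tinner X X = tnorm X ^ 2 := by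
  rw [tnorm, Real.sq_sqrt (tinner_self_nonneg X)]

lemma tinner_adj (A : Matrix I I ℝ) (X Y : Matrix I J ℝ) :
    tinner (A * X) Y = tinner X (Aᵀ * Y) := by
  simp only [tinner, Matrix.mul_apply, Matrix.transpose_apply, Finset.sum_mul, Finset.mul_sum]
  have h1 : ∀ (f : I → J → I → ℝ), (∑ i, ∑ j, ∑ k, f i j k) = ∑ i, ∑ k, ∑ j, f i j k := by
    intro f; exact Finset.sum_congr rfl fun i _ => Finset.sum_comm
  rw [h1, Finset.sum_comm]
  refine Finset.sum_congr rfl fun k _ => ?_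
  rw [Finset.sum_comm]
  exact Finset.sum_congr rfl fun j _ => Finset.sum_congr rfl fun i _ => by ring

lemma tinner_adj' (A : Matrix I I ℝ) (X Y : Matrix I J ℝ) :
    tinner (Aᵀ * X) Y = tinner X (A * Y) := by
  have := tinner_adj Aᵀ X Y
  rwa [Matrix.transpose_transpose] at this

end Helpers

/-- Golub–Kahan biorthogonality: the tensors `U 1, …, U (ℓ+1)` generated by the global
Golub–Kahan bidiagonalization are orthonormal, and the tensors `V 1, …, V ℓ` are
orthonormal, with respect to the Frobenius inner product, assuming no breakdown. -/
theorem global_golub_kahan_orthonormal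
    {I J : Type*} [Fintype I] [Fintype J] (ℓ : ℕ)
    (A : Matrix I I ℝ) (C : Matrix I J ℝ)
    (U V Vt Ut : ℕ → Matrix I J ℝ) (ρ σ : ℕ → ℝ)
    (hσ1 : σ 1 = tnorm C) (hσ1ne : σ 1 ≠ 0) (hU1 : U 1 = (σ 1)⁻¹ • C)
    (hV0 : V 0 = 0)
    (hVt : ∀ j, 1 ≤ j → j ≤ ℓ → Vt j = Aᵀ * U j - σ j • V (j - 1))
    (hρ : ∀ j, 1 ≤ j → j ≤ ℓ → ρ j = tnorm (Vt j) ∧ ρ j ≠ 0)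
    (hV : ∀ j, 1 ≤ j → j ≤ ℓ → V j = (ρ j)⁻¹ • Vt j)
    (hUt : ∀ j, 1 ≤ j → j ≤ ℓ → Ut j = A * V j - ρ j • U j)
    (hσ : ∀ j, 1 ≤ j → j ≤ ℓ → σ (j + 1) = tnorm (Ut j) ∧ σ (j + 1) ≠ 0)
    (hU : ∀ j, 1 ≤ j → j ≤ ℓ → U (j + 1) = (σ (j + 1))⁻¹ • Ut j) :
    (∀ i j, 1 ≤ i → i ≤ ℓ + 1 → 1 ≤ j → j ≤ ℓ + 1 →
        tinner (U i) (U j) = if i = j then 1 else 0) ∧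
    (∀ i j, 1 ≤ i → i ≤ ℓ → 1 ≤ j → j ≤ ℓ →
        tinner (V i) (V j) = if i = j then 1 else 0) := by
  -- the two three-term recurrences in "solved" form
  have hAV : ∀ i, 1 ≤ i → i ≤ ℓ → A * V i = σ (i+1) • U (i+1) + ρ i • U i := by
    intro i h1 h2
    rw [hU i h1 h2, smul_smul, mul_inv_cancel₀ (hσ i h1 h2).2, one_smul, hUt i h1 h2,
      sub_add_cancel]
  have hAtU : ∀ i, 1 ≤ i → i ≤ ℓ → Aᵀ * U i = ρ i • V i + σ i • V (i-1) := by
    intro i h1 h2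
    rw [hV i h1 h2, smul_smul, mul_inv_cancel₀ (hρ i h1 h2).2, one_smul, hVt i h1 h2,
      sub_add_cancel]
  -- unit norms
  have hUself : ∀ j, 1 ≤ j → j ≤ ℓ + 1 → tinner (U j) (U j) = 1 := by
    intro j h1 h2
    cases j with
    | zero => omega
    | succ m =>
      cases m with
      | zero =>
        rw [hU1, tinner_smul_left, tinner_smul_right, tinner_self_eq, ← hσ1]
        field_simp
      | succ n =>
        have h1m : 1 ≤ n + 1 := by omega
        have h2m : n + 1 ≤ ℓ := by omega
        have hs := hσ (n+1) h1m h2m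
        rw [show n + 1 + 1 = (n+1) + 1 from rfl, hU (n+1) h1m h2m, tinner_smul_left,
          tinner_smul_right, tinner_self_eq, ← hs.1]
        field_simp [hs.2]
  have hVself : ∀ j, 1 ≤ j → j ≤ ℓ → tinner (V j) (V j) = 1 := by
    intro j h1 h2
    have hr := hρ j h1 h2
    rw [hV j h1 h2, tinner_smul_left, tinner_smul_right, tinner_self_eq, ← hr.1]
    field_simp [hr.2]
  -- main induction
  have main : ∀ k, k ≤ ℓ →
      (∀ i j, 1 ≤ i → i ≤ k+1 → 1 ≤ j → j ≤ k+1 →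
          tinner (U i) (U j) = if i = j then 1 else 0) ∧
      (∀ i j, 1 ≤ i → i ≤ k → 1 ≤ j → j ≤ k →
          tinner (V i) (V j) = if i = j then 1 else 0) := by
    intro k
    induction k with
    | zero =>
      intro _
      constructor
      · intro i j hi1 hi2 hj1 hj2
        have hi : i = 1 := le_antisymm hi2 hi1
        have hj : j = 1 := le_antisymm hj2 hj1
        subst hi; subst hj
        rw [if_pos rfl]
        exact hUself 1 le_rfl (by omega)
      · intro i j hi1 hi2 _ _; omega
    | succ k ih =>
      intro hk
      obtain ⟨ihU, ihV⟩ := ih (by omega)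
      have hk1 : 1 ≤ k + 1 := by omega
      -- new V orthogonality
      have hVcross : ∀ i, 1 ≤ i → i ≤ k → tinner (V (k+1)) (V i) = 0 := by
        intro i hi1 hi2
        have hiℓ : i ≤ ℓ := by omega
        rw [hV (k+1) hk1 hk, tinner_smul_left, hVt (k+1) hk1 hk, tinner_sub_left,
          tinner_adj', hAV i hi1 hiℓ, tinner_add_right, tinner_smul_right,
          tinner_smul_right, tinner_smul_left]
        have e1 : tinner (U (k+1)) (U (i+1)) = if k+1 = i+1 then 1 else 0 :=
          ihU _ _ hk1 le_rfl (by omega) (by omega)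
        have e2 : tinner (U (k+1)) (U i) = if k+1 = i then 1 else 0 :=
          ihU _ _ hk1 le_rfl hi1 (by omega)
        have e3 : tinner (V (k+1-1)) (V i) = if k = i then 1 else 0 := by
          simp only [Nat.add_sub_cancel]
          exact ihV k i (by omega) le_rfl hi1 hi2
        rw [e1, e2, e3]
        by_cases h : k = i
        · have h1 : k+1 = i+1 := by omega
          have h2 : k+1 ≠ i := by omega
          rw [if_pos h1, if_neg h2, if_pos h, h]; ring
        · have h1 : k+1 ≠ i+1 := by omega
          have h2 : k+1 ≠ i := by omega
          rw [if_neg h1, if_neg h2, if_neg h]; ring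
      have hVnew : ∀ i j, 1 ≤ i → i ≤ k+1 → 1 ≤ j → j ≤ k+1 →
          tinner (V i) (V j) = if i = j then 1 else 0 := by
        intro i j hi1 hi2 hj1 hj2
        by_cases hij : i = j
        · subst hij; rw [if_pos rfl]; exact hVself i hi1 (by omega)
        · rw [if_neg hij]
          by_cases hi : i ≤ k
          · by_cases hj : j ≤ k
            · have := ihV i j hi1 hi hj1 hj; rwa [if_neg hij] at this
            · have hj' : j = k+1 := by omega
              subst hj'
              rw [tinner_comm]; exact hVcross i hi1 hi
          · have hi' : i = k+1 := by omega
            subst hi'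
            exact hVcross j hj1 (by omega)
      -- new U orthogonality
      have hUcross : ∀ i, 1 ≤ i → i ≤ k+1 → tinner (U (k+2)) (U i) = 0 := by
        intro i hi1 hi2
        have hiℓ : i ≤ ℓ := by omega
        rw [show k+2 = (k+1)+1 from rfl, hU (k+1) hk1 hk, tinner_smul_left,
          hUt (k+1) hk1 hk, tinner_sub_left, tinner_adj, hAtU i hi1 hiℓ,
          tinner_add_right, tinner_smul_right, tinner_smul_right, tinner_smul_left]
        have e1 : tinner (V (k+1)) (V i) = if k+1 = i then 1 else 0 :=
          hVnew _ _ hk1 le_rfl hi1 hi2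
        have e2 : tinner (V (k+1)) (V (i-1)) = 0 := by
          rcases Nat.eq_or_lt_of_le hi1 with h | h
          · rw [show i - 1 = 0 by omega, hV0, tinner_zero_right]
          · have := hVnew (k+1) (i-1) hk1 le_rfl (by omega) (by omega)
            rwa [if_neg (by omega)] at this
        have e3 : tinner (U (k+1)) (U i) = if k+1 = i then 1 else 0 :=
          ihU _ _ hk1 le_rfl hi1 hi2
        rw [e1, e2, e3]
        by_cases h : k+1 = i
        · rw [if_pos h, ← h]; ring
        · rw [if_neg h]; ring
      have hUnew : ∀ i j, 1 ≤ i → i ≤ k+2 → 1 ≤ j → j ≤ k+2 →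
          tinner (U i) (U j) = if i = j then 1 else 0 := by
        intro i j hi1 hi2 hj1 hj2
        by_cases hij : i = j
        · subst hij; rw [if_pos rfl]; exact hUself i hi1 (by omega)
        · rw [if_neg hij]
          by_cases hi : i ≤ k+1
          · by_cases hj : j ≤ k+1
            · have := ihU i j hi1 hi hj1 hj; rwa [if_neg hij] at this
            · have hj' : j = k+2 := by omega
              subst hj'
              rw [tinner_comm]; exact hUcross i hi1 hi
          · have hi' : i = k+2 := by omega
            subst hi'
            exact hUcross j hj1 (by omega)
      exact ⟨hUnew, hVnew⟩
  exact main ℓ le_rfl
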